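/- arXiv:2005.02601 — 4 statements merged into one kernel-verified Lean document; each statement's English description precedes it below -/
import Mathlib

section
/- Let X be an m×n random binary matrix with i.i.d. Bernoulli(q) entries, and suppose each cell's selector fails independently with probability p_f. For a fixed cell (i,j) with x_{i,j}=0, the probability that there exist indices k≠i, ℓ≠j with x_{i,ℓ}=x_{k,ℓ}=x_{k,j}=1 and the selector at (k,ℓ) failed equals 1 − Σ_{u=0}^{m−1} Σ_{v=0}^{n−1} C(m−1,u) C(n−1,v) q^{u+v} (1−q)^{(m−1−u)+(n−1−v)} (1−p_f q)^{uv}. -/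
/-!
Pass to the complement. Given the data with `x i j = 0`, no sneak path occurs iff the selectors
of all candidate cells `(k, l)` (`k ≠ i`, `l ≠ j`, `x i l = x k l = x k j = 1`) work, which has
probability `∏ (1 - p_f)` over those cells. Conditioned on row `i`, the other rows are
independent: row `k` contributes `1 - q` when `x k j = 0` and `q (1 - p_f q) ^ u` otherwise,
where `u` counts the ones of row `i` outside column `j`. So the answer is
`1 - E[(1 - q + q (1 - p_f q) ^ u) ^ (m - 1)]`, and the binomial theorem, once for the power and
once for the distribution of `u`, gives the formula.
-/

open Finset

variable {R : Type*} [CommRing R]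

def bernoulliWeight (q : R) (b : Bool) : R := if b then q else 1 - q

@[simp] lemma bernoulliWeight_true (q : R) : bernoulliWeight q true = q := rfl

@[simp] lemma bernoulliWeight_false (q : R) : bernoulliWeight q false = 1 - q := rfl

lemma sum_prod_prod_bernoulliWeight {ι κ : Type*} [Fintype ι] [DecidableEq ι] [Fintype κ]
    [DecidableEq κ] (q : ι → κ → R) :
    ∑ X : ι → κ → Bool, ∏ a, ∏ b, bernoulliWeight (q a b) (X a b) = 1 := by
  rw [← Fintype.prod_sum fun a (x : κ → Bool) => ∏ b, bernoulliWeight (q a b) (x b)]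
  simp [← Fintype.prod_sum]

lemma sum_sum_ite_and {α β : Type*} [Fintype α] [Fintype β] (A : α → Prop) [DecidablePred A]
    (E : α → β → Prop) [∀ x y, Decidable (E x y)] (w : α → R) (v : β → R) :
    ∑ x, ∑ y, (if A x ∧ E x y then w x * v y else 0)
      = ∑ x, (if A x then w x else 0) * (∑ y, v y - ∑ y, if ¬E x y then v y else 0) := by
  refine Finset.sum_congr rfl fun x _ => ?_
  rw [← sum_sub_distrib, mul_sum]
  refine Finset.sum_congr rfl fun y _ => ?_
  by_cases hA : A x <;> by_cases hE : E x y <;> simp [hA, hE]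

lemma Fintype.sum_pi_mul_prod_erase {ι β : Type*} [Fintype ι] [DecidableEq ι] [Fintype β]
    [DecidableEq β] (i : ι) (f : β → R) (g : ι → β → β → R) :
    ∑ x : ι → β, f (x i) * ∏ k ∈ univ.erase i, g k (x i) (x k)
      = ∑ b, f b * ∏ k ∈ univ.erase i, ∑ c, g k b c := by
  let h (b : β) (k : ι) (c : β) : R := if k = i then (if c = b then f b else 0) else g k b c
  have h_erase (b : β) {k : ι} (hk : k ∈ univ.erase i) (c : β) : h b k c = g k b c :=
    if_neg (ne_of_mem_erase hk)
  have h_prod (b : β) (x : ι → β) :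
      ∏ k, h b k (x k) = if x i = b then f b * ∏ k ∈ univ.erase i, g k b (x k) else 0 := by
    rw [← mul_prod_erase univ _ (mem_univ i), Finset.prod_congr rfl fun k hk => h_erase b hk _]
    split_ifs <;> simp_all [h]
  calc ∑ x : ι → β, f (x i) * ∏ k ∈ univ.erase i, g k (x i) (x k)
      = ∑ b, ∑ x : ι → β, ∏ k, h b k (x k) := by
        simp_rw [h_prod]
        rw [Finset.sum_comm]
        simp
    _ = ∑ b, f b * ∏ k ∈ univ.erase i, ∑ c, g k b c := by
        refine Finset.sum_congr rfl fun b _ => ?_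
        rw [← Fintype.prod_sum, ← mul_prod_erase univ _ (mem_univ i),
          Finset.prod_congr rfl fun k hk => Finset.sum_congr rfl fun c _ => h_erase b hk c]
        simp [h]

lemma sum_ite_not_exists_and {ι κ : Type*} [Fintype ι] [DecidableEq ι] [Fintype κ]
    [DecidableEq κ] (D : ι → κ → Prop) [∀ a b, Decidable (D a b)] (p : R) :
    ∑ S : ι → κ → Bool,
      (if ¬∃ a b, D a b ∧ S a b = true then ∏ x : ι × κ, bernoulliWeight p (S x.1 x.2) else 0)
      = ∏ a, ∏ b, if D a b then 1 - p else 1 := by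
  have h_prod (S : ι → κ → Bool) :
      (if ¬∃ a b, D a b ∧ S a b = true then ∏ x : ι × κ, bernoulliWeight p (S x.1 x.2) else 0)
        = ∏ a, ∏ b, if D a b ∧ S a b = true then 0 else bernoulliWeight p (S a b) := by
    split_ifs with h
    · obtain ⟨a, b, hab⟩ := h
      symm
      apply Finset.prod_eq_zero (mem_univ a)
      exact Finset.prod_eq_zero (mem_univ b) (if_pos hab)
    · rw [Fintype.prod_prod_type]
      push Not at h
      exact Finset.prod_congr rfl fun a _ => Finset.prod_congr rfl fun b _ =>
        (if_neg fun hab => h a b hab.1 hab.2).symm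
  simp_rw [h_prod]
  rw [← Fintype.prod_sum fun a (s : κ → Bool) =>
    ∏ b, if D a b ∧ s b = true then 0 else bernoulliWeight p (s b)]
  refine Finset.prod_congr rfl fun a _ => (Fintype.prod_sum fun b c =>
    if D a b ∧ c = true then 0 else bernoulliWeight p c).symm.trans ?_
  refine Finset.prod_congr rfl fun b _ => ?_
  by_cases hD : D a b <;> simp [hD]

lemma prod_bernoulliWeight_ite_eq_mul_prod_erase {κ : Type*} [Fintype κ] [DecidableEq κ]
    (j : κ) (q : R) (r : κ → Bool) :
    ∏ l, bernoulliWeight (if l = j then 0 else q) (r l)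
      = bernoulliWeight 0 (r j) * ∏ l ∈ univ.erase j, bernoulliWeight q (r l) := by
  rw [← mul_prod_erase univ _ (mem_univ j), if_pos rfl,
    Finset.prod_congr rfl fun l hl => by rw [if_neg (ne_of_mem_erase hl)]]

lemma ite_prod_filter_ne_eq_prod {ι : Type*} [Fintype ι] [DecidableEq ι] (c : ι) (q : R)
    (x : ι → Bool) :
    (if x c = false then ∏ a ∈ univ.filter (· ≠ c), bernoulliWeight q (x a) else 0)
      = ∏ a, bernoulliWeight (if a = c then 0 else q) (x a) := by
  rw [prod_bernoulliWeight_ite_eq_mul_prod_erase, filter_ne']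
  cases x c <;> simp

lemma sum_prod_bernoulliWeight_mul_ite {κ : Type*} [Fintype κ] [DecidableEq κ] (q pf : R)
    (j : κ) (r : κ → Bool) :
    ∑ row : κ → Bool, ∏ l, bernoulliWeight q (row l) *
        (if l ≠ j ∧ r l = true ∧ row l = true ∧ row j = true then 1 - pf else 1)
      = 1 - q + q * ∏ l ∈ univ.erase j, if r l = true then 1 - pf * q else 1 := by
  have h_split (row : κ → Bool) :
      ∏ l, bernoulliWeight q (row l) *
          (if l ≠ j ∧ r l = true ∧ row l = true ∧ row j = true then 1 - pf else 1)
        = bernoulliWeight q (row j) * ∏ l ∈ univ.erase j, bernoulliWeight q (row l) *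
          (if r l = true ∧ row l = true ∧ row j = true then 1 - pf else 1) := by
    rw [← mul_prod_erase univ _ (mem_univ j)]
    simp only [ne_eq, not_true_eq_false, false_and, if_false, mul_one]
    congr 1
    exact Finset.prod_congr rfl fun l hl => by simp [ne_of_mem_erase hl]
  simp_rw [h_split]
  rw [Fintype.sum_pi_mul_prod_erase j (bernoulliWeight q)
    fun l t s => bernoulliWeight q s * if r l = true ∧ s = true ∧ t = true then 1 - pf else 1]
  have h_true (l : κ) : ∑ s, bernoulliWeight q s *
      (if r l = true ∧ s = true ∧ true = true then 1 - pf else 1)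
        = if r l = true then 1 - pf * q else 1 := by
    cases r l <;> simp
    ring
  have h_false (l : κ) : ∑ s, bernoulliWeight q s *
      (if r l = true ∧ s = true ∧ false = true then 1 - pf else 1) = 1 := by
    simp
  rw [Fintype.sum_bool, Finset.prod_congr rfl fun l _ => h_true l,
    Finset.prod_congr rfl fun l _ => h_false l, prod_const_one]
  simp only [bernoulliWeight_true, bernoulliWeight_false]
  ring

lemma sum_prod_bernoulliWeight_ite_mul_prod_pow {κ : Type*} [Fintype κ] [DecidableEq κ] (q c : R)
    (j : κ) (v : ℕ) :
    ∑ r : κ → Bool, (∏ l, bernoulliWeight (if l = j then 0 else q) (r l)) *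
        (∏ l ∈ univ.erase j, if r l = true then c else 1) ^ v
      = (q * c ^ v + (1 - q)) ^ (Fintype.card κ - 1) := by
  have h_split (r : κ → Bool) :
      (∏ l, bernoulliWeight (if l = j then 0 else q) (r l)) *
          (∏ l ∈ univ.erase j, if r l = true then c else 1) ^ v
        = bernoulliWeight 0 (r j) *
          ∏ l ∈ univ.erase j, bernoulliWeight q (r l) * if r l = true then c ^ v else 1 := by
    rw [prod_bernoulliWeight_ite_eq_mul_prod_erase, ← prod_pow, mul_assoc, ← prod_mul_distrib]
    simp only [ite_pow, one_pow]
  simp_rw [h_split]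
  rw [Fintype.sum_pi_mul_prod_erase j (bernoulliWeight 0)
    fun _ _ s => bernoulliWeight q s * if s = true then c ^ v else 1]
  simp [card_erase_of_mem]

lemma sum_prod_prod_bernoulliWeight_mul_prod_prod_ite_eq_sum_pow {ι κ : Type*} [Fintype ι]
    [DecidableEq ι] [Fintype κ] [DecidableEq κ] (q pf : R) (i : ι) (j : κ) :
    ∑ X : ι → κ → Bool, (∏ a, ∏ b, bernoulliWeight (if (a, b) = (i, j) then 0 else q) (X a b)) *
        ∏ a, ∏ b,
          (if a ≠ i ∧ b ≠ j ∧ X i b = true ∧ X a b = true ∧ X a j = true then 1 - pf else 1)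
      = ∑ r : κ → Bool, (∏ l, bernoulliWeight (if l = j then 0 else q) (r l)) *
          (1 - q + q * ∏ l ∈ univ.erase j, if r l = true then 1 - pf * q else 1) ^
            (Fintype.card ι - 1) := by
  have h_rows (X : ι → κ → Bool) :
      (∏ a, ∏ b, bernoulliWeight (if (a, b) = (i, j) then 0 else q) (X a b)) *
        ∏ a, ∏ b,
          (if a ≠ i ∧ b ≠ j ∧ X i b = true ∧ X a b = true ∧ X a j = true then 1 - pf else 1)
      = (∏ b, bernoulliWeight (if b = j then 0 else q) (X i b)) *
        ∏ k ∈ univ.erase i, ∏ b, bernoulliWeight q (X k b) *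
          (if b ≠ j ∧ X i b = true ∧ X k b = true ∧ X k j = true then 1 - pf else 1) := by
    rw [← prod_mul_distrib, ← mul_prod_erase univ _ (mem_univ i)]
    congr 1
    · simp
    · refine Finset.prod_congr rfl fun k hk => ?_
      rw [prod_mul_distrib]
      simp [ne_of_mem_erase hk]
  simp_rw [h_rows]
  rw [Fintype.sum_pi_mul_prod_erase i
    (fun r : κ → Bool => ∏ l, bernoulliWeight (if l = j then 0 else q) (r l))
    fun _ r row => ∏ b, bernoulliWeight q (row b) *
      if b ≠ j ∧ r b = true ∧ row b = true ∧ row j = true then 1 - pf else 1]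
  simp_rw [sum_prod_bernoulliWeight_mul_ite, prod_const, card_erase_of_mem (mem_univ i),
    card_univ]

lemma sum_prod_bernoulliWeight_ite_mul_add_pow {κ : Type*} [Fintype κ] [DecidableEq κ]
    (q c : R) (j : κ) (N : ℕ) :
    ∑ r : κ → Bool, (∏ l, bernoulliWeight (if l = j then 0 else q) (r l)) *
        (1 - q + q * ∏ l ∈ univ.erase j, if r l = true then c else 1) ^ N
      = ∑ u ∈ range (N + 1), ∑ v ∈ range (Fintype.card κ),
          (N.choose u : R) * ((Fintype.card κ - 1).choose v : R) *
            q ^ (u + v) * (1 - q) ^ ((N - u) + (Fintype.card κ - 1 - v)) * c ^ (u * v) := by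
  simp_rw [add_comm (1 - q), add_pow, mul_sum, mul_pow]
  rw [sum_comm]
  refine Finset.sum_congr rfl fun u _ => ?_
  calc ∑ r : κ → Bool, (∏ l, bernoulliWeight (if l = j then 0 else q) (r l)) *
        (q ^ u * (∏ l ∈ univ.erase j, if r l = true then c else 1) ^ u *
          (1 - q) ^ (N - u) * (N.choose u : R))
      = q ^ u * (1 - q) ^ (N - u) * (N.choose u : R) *
          ∑ r : κ → Bool, (∏ l, bernoulliWeight (if l = j then 0 else q) (r l)) *
            (∏ l ∈ univ.erase j, if r l = true then c else 1) ^ u := by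
        rw [mul_sum]
        exact Finset.sum_congr rfl fun r _ => by ring
    _ = q ^ u * (1 - q) ^ (N - u) * (N.choose u : R) *
          (q * c ^ u + (1 - q)) ^ (Fintype.card κ - 1) := by
        rw [sum_prod_bernoulliWeight_ite_mul_prod_pow]
    _ = _ := by
        rw [add_pow, Nat.sub_add_cancel (Fintype.card_pos_iff.mpr ⟨j⟩), mul_sum]
        exact Finset.sum_congr rfl fun v _ => by ring

lemma sum_prod_prod_bernoulliWeight_mul_prod_prod_ite {ι κ : Type*} [Fintype ι] [DecidableEq ι]
    [Fintype κ] [DecidableEq κ] (q pf : R) (i : ι) (j : κ) :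
    ∑ X : ι → κ → Bool, (∏ a, ∏ b, bernoulliWeight (if (a, b) = (i, j) then 0 else q) (X a b)) *
        ∏ a, ∏ b,
          (if a ≠ i ∧ b ≠ j ∧ X i b = true ∧ X a b = true ∧ X a j = true then 1 - pf else 1)
      = ∑ u ∈ range (Fintype.card ι), ∑ v ∈ range (Fintype.card κ),
          ((Fintype.card ι - 1).choose u : R) * ((Fintype.card κ - 1).choose v : R) *
            q ^ (u + v) * (1 - q) ^ ((Fintype.card ι - 1 - u) + (Fintype.card κ - 1 - v)) *
            (1 - pf * q) ^ (u * v) := by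
  rw [sum_prod_prod_bernoulliWeight_mul_prod_prod_ite_eq_sum_pow,
    sum_prod_bernoulliWeight_ite_mul_add_pow, Nat.sub_add_cancel (Fintype.card_pos_iff.mpr ⟨i⟩)]

theorem sneak_path_probability_general (m n : ℕ) (q pf : ℝ) (i : Fin m) (j : Fin n) :
    (∑ X : Fin m → Fin n → Bool, ∑ S : Fin m → Fin n → Bool,
      (if X i j = false ∧ (∃ k : Fin m, ∃ l : Fin n, k ≠ i ∧ l ≠ j ∧
            X i l = true ∧ X k l = true ∧ X k j = true ∧ S k l = true) then
        (∏ p ∈ Finset.univ.filter (fun p : Fin m × Fin n => p ≠ (i, j)),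
            (if X p.1 p.2 then q else 1 - q)) *
          ∏ p : Fin m × Fin n, (if S p.1 p.2 then pf else 1 - pf)
      else 0))
    = 1 - ∑ u ∈ Finset.range m, ∑ v ∈ Finset.range n,
        ((m - 1).choose u : ℝ) * ((n - 1).choose v : ℝ) * q ^ (u + v) *
          (1 - q) ^ ((m - 1 - u) + (n - 1 - v)) * (1 - pf * q) ^ (u * v) := by
  have h_weight (X : Fin m → Fin n → Bool) :
      (if X i j = false then
        ∏ p ∈ univ.filter (fun p : Fin m × Fin n => p ≠ (i, j)), (if X p.1 p.2 then q else 1 - q)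
        else 0)
        = ∏ a, ∏ b, bernoulliWeight (if (a, b) = (i, j) then 0 else q) (X a b) := by
    rw [← Fintype.prod_prod_type fun p => bernoulliWeight (if p = (i, j) then 0 else q) (X p.1 p.2),
      ← ite_prod_filter_ne_eq_prod]
    rfl
  have h_total :
      ∑ S : Fin m → Fin n → Bool, ∏ p : Fin m × Fin n, (if S p.1 p.2 then pf else 1 - pf) = 1 := by
    simp_rw [Fintype.prod_prod_type]
    exact sum_prod_prod_bernoulliWeight _
  have h_no_sneak (X : Fin m → Fin n → Bool) :
      ∑ S : Fin m → Fin n → Bool,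
        (if ¬∃ k l, k ≠ i ∧ l ≠ j ∧ X i l = true ∧ X k l = true ∧ X k j = true ∧ S k l = true
          then ∏ p : Fin m × Fin n, (if S p.1 p.2 then pf else 1 - pf) else 0)
        = ∏ a, ∏ b,
          if a ≠ i ∧ b ≠ j ∧ X i b = true ∧ X a b = true ∧ X a j = true then 1 - pf else 1 := by
    convert sum_ite_not_exists_and _ pf using 3
    simp only [and_assoc]
    rfl
  rw [sum_sum_ite_and]
  simp_rw [h_weight, h_total, h_no_sneak, mul_sub, mul_one, sum_sub_distrib,
    sum_prod_prod_bernoulliWeight, sum_prod_prod_bernoulliWeight_mul_prod_prod_ite,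
    Fintype.card_fin]

/-- conditional probability (given `x i j = 0`) that some sneak path
affects cell `(i,j)`, in an `m×n` array with i.i.d. Bernoulli(q) data entries and
i.i.d. selector failures with probability `pf`. -/
theorem sneak_path_probability (m n : ℕ) (hm : 1 ≤ m) (hn : 1 ≤ n)
    (q pf : ℝ) (hq0 : 0 ≤ q) (hq1 : q ≤ 1) (hp0 : 0 ≤ pf) (hp1 : pf ≤ 1)
    (i : Fin m) (j : Fin n) :
    (∑ X : Fin m → Fin n → Bool, ∑ S : Fin m → Fin n → Bool,
      (if X i j = false ∧ (∃ k : Fin m, ∃ l : Fin n, k ≠ i ∧ l ≠ j ∧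
            X i l = true ∧ X k l = true ∧ X k j = true ∧ S k l = true) then
        (∏ p ∈ Finset.univ.filter (fun p : Fin m × Fin n => p ≠ (i, j)),
            (if X p.1 p.2 then q else 1 - q)) *
          ∏ p : Fin m × Fin n, (if S p.1 p.2 then pf else 1 - pf)
      else 0))
    = 1 - ∑ u ∈ Finset.range m, ∑ v ∈ Finset.range n,
        ((m - 1).choose u : ℝ) * ((n - 1).choose v : ℝ) * q ^ (u + v) *
          (1 - q) ^ ((m - 1 - u) + (n - 1 - v)) * (1 - pf * q) ^ (u * v) :=
  sneak_path_probability_general m n q pf i j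
end

section
/- With the notation of the sneak-path probability formula, if the second-order Taylor truncation (1−p_f q)^{uv} ≈ 1 − uv p_f q + α C(uv,2) p_f^2 q^2 is substituted into the double sum, the resulting approximation evaluates exactly to ε_q ≈ (m−1)(n−1) p_f q^3 − α [ 2q C(m−1,2) C(n−1,2) + (n−1) C(m−1,2) + (m−1) C(n−1,2) ] p_f^2 q^5. That is: Σ_{u=0}^{m−1} Σ_{v=0}^{n−1} C(m−1,u) C(n−1,v) q^{u+v} (1−q)^{m−1−u+n−1−v} (uv p_f q − α C(uv,2) p_f^2 q^2) = (m−1)(n−1) p_f q^3 − α [ 2q C(m−1,2) C(n−1,2) + (n−1) C(m−1,2) + (m−1) C(n−1,2) ] p_f^2 q^5. -/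
open Finset

private lemma bern_eval (N v : ℕ) (q : ℝ) :
    (bernsteinPolynomial ℝ N v).eval q = (N.choose v : ℝ) * q ^ v * (1 - q) ^ (N - v) := by
  simp [bernsteinPolynomial]

private lemma moment0 (N : ℕ) (q : ℝ) :
    ∑ v ∈ Finset.range (N + 1), (N.choose v : ℝ) * q ^ v * (1 - q) ^ (N - v) = 1 := by
  have := congrArg (Polynomial.eval q) (bernsteinPolynomial.sum ℝ N)
  simpa [Polynomial.eval_finset_sum, bern_eval] using this

private lemma moment1 (N : ℕ) (q : ℝ) :
    ∑ v ∈ Finset.range (N + 1),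
      (N.choose v : ℝ) * q ^ v * (1 - q) ^ (N - v) * v = N * q := by
  have := congrArg (Polynomial.eval q) (bernsteinPolynomial.sum_smul ℝ N)
  simpa [Polynomial.eval_finset_sum, bern_eval, mul_comm] using this

private lemma moment2 (N : ℕ) (q : ℝ) :
    ∑ v ∈ Finset.range (N + 1),
      (N.choose v : ℝ) * q ^ v * (1 - q) ^ (N - v) * ((v : ℝ) * ((v : ℝ) - 1))
      = N * ((N : ℝ) - 1) * q ^ 2 := by
  have := congrArg (Polynomial.eval q) (bernsteinPolynomial.sum_mul_smul ℝ N)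
  simp only [Polynomial.eval_finset_sum, Polynomial.eval_smul, bern_eval, smul_eq_mul,
    Polynomial.eval_pow, Polynomial.eval_X, Nat.cast_mul] at this
  have h : ∀ v : ℕ, ((v * (v - 1) : ℕ) : ℝ) = (v : ℝ) * ((v : ℝ) - 1) := by
    intro v
    cases v with
    | zero => simp
    | succ k => push_cast [Nat.succ_sub_one]; ring
  have hN : ((N * (N - 1) : ℕ) : ℝ) = (N : ℝ) * ((N : ℝ) - 1) := h N
  calc ∑ v ∈ Finset.range (N + 1),
      (N.choose v : ℝ) * q ^ v * (1 - q) ^ (N - v) * ((v : ℝ) * ((v : ℝ) - 1))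
      = ∑ v ∈ Finset.range (N + 1),
        ((v * (v - 1) : ℕ) : ℝ) * ((N.choose v : ℝ) * q ^ v * (1 - q) ^ (N - v)) := by
        refine Finset.sum_congr rfl fun v _ => ?_; rw [h v]; ring
    _ = (N : ℝ) * ((N : ℝ) - 1) * q ^ 2 := by
        rw [← hN]
        simpa [Nat.cast_mul, h] using this

private lemma sum_lin (N : ℕ) (q c a b : ℝ) :
    ∑ v ∈ Finset.range (N + 1),
      (N.choose v : ℝ) * q ^ v * (1 - q) ^ (N - v) * (c + a * v + b * ((v : ℝ) * ((v : ℝ) - 1)))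
      = c + a * ((N : ℝ) * q) + b * ((N : ℝ) * ((N : ℝ) - 1) * q ^ 2) := by
  have h0 := moment0 N q
  have h1 := moment1 N q
  have h2 := moment2 N q
  calc ∑ v ∈ Finset.range (N + 1),
      (N.choose v : ℝ) * q ^ v * (1 - q) ^ (N - v) * (c + a * v + b * ((v : ℝ) * ((v : ℝ) - 1)))
      = ∑ v ∈ Finset.range (N + 1),
        (c * ((N.choose v : ℝ) * q ^ v * (1 - q) ^ (N - v))
          + a * ((N.choose v : ℝ) * q ^ v * (1 - q) ^ (N - v) * v)
          + b * ((N.choose v : ℝ) * q ^ v * (1 - q) ^ (N - v) * ((v : ℝ) * ((v : ℝ) - 1)))) := by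
        refine Finset.sum_congr rfl fun v _ => ?_; ring
    _ = c + a * ((N : ℝ) * q) + b * ((N : ℝ) * ((N : ℝ) - 1) * q ^ 2) := by
        rw [Finset.sum_add_distrib, Finset.sum_add_distrib, ← Finset.mul_sum, ← Finset.mul_sum,
          ← Finset.mul_sum, h0, h1, h2, mul_one]

/-- the second-order Taylor truncation of `(1 - p_f q)^{uv}`,
substituted into the binomial double sum, evaluates exactly to the claimed
closed form. -/
theorem taylor_sneak_path_approx (m n : ℕ) (hm : 2 ≤ m) (hn : 2 ≤ n)
    (q pf α : ℝ) (hq0 : 0 ≤ q) (hq1 : q ≤ 1) (hpf : 0 ≤ pf) :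
    (∑ u ∈ Finset.range m, ∑ v ∈ Finset.range n,
      ((m - 1).choose u : ℝ) * ((n - 1).choose v : ℝ) * q ^ (u + v) *
        (1 - q) ^ (m - 1 - u + (n - 1 - v)) *
        ((u * v : ℝ) * pf * q - α * ((u * v).choose 2 : ℝ) * pf ^ 2 * q ^ 2))
    = ((m : ℝ) - 1) * ((n : ℝ) - 1) * pf * q ^ 3
      - α * (2 * q * ((m - 1).choose 2 : ℝ) * ((n - 1).choose 2 : ℝ)
          + ((n : ℝ) - 1) * ((m - 1).choose 2 : ℝ)
          + ((m : ℝ) - 1) * ((n - 1).choose 2 : ℝ)) * pf ^ 2 * q ^ 5 := by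
  obtain ⟨M, rfl⟩ : ∃ M, m = M + 1 := ⟨m - 1, (Nat.succ_pred_eq_of_pos (by omega)).symm⟩
  obtain ⟨N, rfl⟩ : ∃ N, n = N + 1 := ⟨n - 1, (Nat.succ_pred_eq_of_pos (by omega)).symm⟩
  simp only [Nat.add_sub_cancel]
  set s : ℝ := α * pf ^ 2 * q ^ 2 / 2 with hs
  have key : ∀ u ∈ Finset.range (M + 1),
      (∑ v ∈ Finset.range (N + 1),
        (M.choose u : ℝ) * (N.choose v : ℝ) * q ^ (u + v) *
          (1 - q) ^ (M - u + (N - v)) *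
          ((u * v : ℝ) * pf * q - α * ((u * v).choose 2 : ℝ) * pf ^ 2 * q ^ 2))
      = (M.choose u : ℝ) * q ^ u * (1 - q) ^ (M - u) *
          (0 + (pf * q * ((N : ℝ) * q) - s * ((N : ℝ) * ((N : ℝ) - 1) * q ^ 2)) * u
            + (-(s * ((N : ℝ) * q)) - s * ((N : ℝ) * ((N : ℝ) - 1) * q ^ 2))
              * ((u : ℝ) * ((u : ℝ) - 1))) := by
    intro u _
    have step : ∀ v : ℕ,
        (M.choose u : ℝ) * (N.choose v : ℝ) * q ^ (u + v) *
          (1 - q) ^ (M - u + (N - v)) *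
          ((u * v : ℝ) * pf * q - α * ((u * v).choose 2 : ℝ) * pf ^ 2 * q ^ 2)
        = (N.choose v : ℝ) * q ^ v * (1 - q) ^ (N - v) *
            (0
              + ((M.choose u : ℝ) * q ^ u * (1 - q) ^ (M - u)
                  * ((u : ℝ) * pf * q - s * ((u : ℝ) * ((u : ℝ) - 1)))) * v
              + (-(s * ((M.choose u : ℝ) * q ^ u * (1 - q) ^ (M - u))
                  * ((u : ℝ) * ((u : ℝ) - 1) + u))) * ((v : ℝ) * ((v : ℝ) - 1))) := by
      intro v
      have hc : (((u * v).choose 2 : ℕ) : ℝ) = (u : ℝ) * v * ((u : ℝ) * v - 1) / 2 := by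
        rw [Nat.cast_choose_two]; push_cast; ring
      rw [pow_add q, pow_add (1 - q), hc, hs]
      push_cast
      ring
    rw [Finset.sum_congr rfl fun v _ => step v, sum_lin]
    ring
  rw [Finset.sum_congr rfl key, sum_lin]
  have hM2 : ((M.choose 2 : ℕ) : ℝ) = (M : ℝ) * ((M : ℝ) - 1) / 2 := by
    rw [Nat.cast_choose_two]
  have hN2 : ((N.choose 2 : ℕ) : ℝ) = (N : ℝ) * ((N : ℝ) - 1) / 2 := by
    rw [Nat.cast_choose_two]
  rw [hM2, hN2, hs]
  push_cast
  ring
end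

section
/- For the (ε,σ)-channel with fixed input distribution Bernoulli(q) (0<q<1) and fixed σ>0, the mutual information C_q(ε,σ) = I(X;Y) is a non-increasing function of ε on [0,1]; in particular C_q(1,σ) ≤ C_q(ε,σ) ≤ C_q(0,σ) for all ε ∈ [0,1]. -/
open MeasureTheory

/-- Gaussian density with standard deviation `σ` and mean `m`, evaluated at `y`. -/
noncomputable def gauss (σ y m : ℝ) : ℝ :=
  1 / (Real.sqrt (2 * Real.pi) * σ) * Real.exp (-(y - m) ^ 2 / (2 * σ ^ 2))

/-- Channel transition density of the `(ε,σ)`-channel: input `1` gives `N(R1,σ²)`;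
input `0` gives the mixture `ε·N(R0',σ²) + (1−ε)·N(R0,σ²)`. -/
noncomputable def W (R0 R0' R1 σ ε : ℝ) (x : Bool) (y : ℝ) : ℝ :=
  if x then gauss σ y R1 else ε * gauss σ y R0' + (1 - ε) * gauss σ y R0

/-- Mutual information `C_q(ε,σ) = I(X;Y)` of the `(ε,σ)`-channel with Bernoulli(q) input. -/
noncomputable def Cq (R0 R0' R1 σ q ε : ℝ) : ℝ :=
  ∫ y : ℝ,
    (q * W R0 R0' R1 σ ε true y *
        Real.logb 2 (W R0 R0' R1 σ ε true y /
          (q * W R0 R0' R1 σ ε true y + (1 - q) * W R0 R0' R1 σ ε false y)) +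
      (1 - q) * W R0 R0' R1 σ ε false y *
        Real.logb 2 (W R0 R0' R1 σ ε false y /
          (q * W R0 R0' R1 σ ε true y + (1 - q) * W R0 R0' R1 σ ε false y)))

/-!
Write `φ_m` for the Gaussian density with mean `m`, `A_ε = ε φ_{R0'} + (1 - ε) φ_{R0}` for the
output density on input `0` and `M_ε = q φ_{R1} + (1 - q) A_ε`. For a fixed input law, mutual
information is convex in the channel law, so `C(ε₁) - C(ε₂)` is at least the first-order term
`(1 - q) (ε₂ - ε₁) ∫ (φ_{R0} - φ_{R0'}) log (A_{ε₂} / M_{ε₂})`. Since `R1` lies below `R0'` and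
`R0`, the likelihood ratio `A_ε / φ_{R1}` increases in `y`, hence so does `log (A_ε / M_ε)`;
and `φ_{R0} - φ_{R0'}` is odd about the midpoint of `R0'` and `R0` and nonnegative to its right.
Pairing each point with its mirror image makes the integral nonnegative.
-/

open Real

theorem convex_comb_pos {q G A : ℝ} (hq0 : 0 ≤ q) (hq1 : q ≤ 1) (hG : 0 < G) (hA : 0 < A) :
    0 < q * G + (1 - q) * A := by
  rcases hq0.eq_or_lt with rfl | hq
  · simpa using hA
  · have : 0 ≤ (1 - q) * A := mul_nonneg (by linarith) hA.le
    linarith [mul_pos hq hG]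

theorem div_convex_comb_le_div_convex_comb {q G₁ G₂ A₁ A₂ : ℝ} (hq0 : 0 ≤ q) (hq1 : q ≤ 1)
    (hG₁ : 0 < G₁) (hG₂ : 0 < G₂) (hA₁ : 0 < A₁) (hA₂ : 0 < A₂) (h : A₁ * G₂ ≤ A₂ * G₁) :
    A₁ / (q * G₁ + (1 - q) * A₁) ≤ A₂ / (q * G₂ + (1 - q) * A₂) := by
  rw [div_le_div_iff₀ (convex_comb_pos hq0 hq1 hG₁ hA₁) (convex_comb_pos hq0 hq1 hG₂ hA₂)]
  linarith [mul_le_mul_of_nonneg_left h hq0]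

theorem abs_mul_mul_log_div_le {p x M : ℝ} (hp : 0 < p) (hx : 0 < x) (hpx : p * x ≤ M) :
    |p * x * log (x / M)| ≤ (1 + |log p|) * M := by
  have hM : 0 < M := (mul_pos hp hx).trans_le hpx
  have ht : 0 < p * x / M := by positivity
  have hsplit : p * x * log (x / M) = M * (log (p * x / M) * (p * x / M)) - p * x * log p := by
    rw [mul_div_assoc, log_mul hp.ne' (by positivity)]
    field_simp
    ring
  have h1 := (abs_log_mul_self_lt _ ht ((div_le_one hM).2 hpx)).le
  have h2 : |p * x * log p| ≤ M * |log p| := by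
    rw [abs_mul, abs_of_pos (mul_pos hp hx)]
    exact mul_le_mul_of_nonneg_right hpx (abs_nonneg _)
  calc |p * x * log (x / M)|
      ≤ |M * (log (p * x / M) * (p * x / M))| + |p * x * log p| := by
        rw [hsplit]; exact abs_sub _ _
    _ ≤ M * 1 + M * |log p| := by
        rw [abs_mul, abs_of_pos hM]; gcongr
    _ = (1 + |log p|) * M := by ring

theorem integral_nonneg_of_reflect_add_nonneg {f : ℝ → ℝ} (hf : Integrable f) (c : ℝ)
    (h : ∀ u, 0 ≤ f (c - u) + f (c + u)) : 0 ≤ ∫ y, f y := by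
  have hsum : ∫ u, (f (c - u) + f (c + u)) = 2 * ∫ y, f y := by
    rw [integral_add (hf.comp_sub_left c) (hf.comp_add_left c), integral_sub_left_eq_self,
      integral_add_left_eq_self, two_mul]
  have : 0 ≤ ∫ u, (f (c - u) + f (c + u)) := integral_nonneg h
  linarith

noncomputable def mutualInfoIntegrand (q G A : ℝ) : ℝ :=
  q * G * log (G / (q * G + (1 - q) * A)) + (1 - q) * A * log (A / (q * G + (1 - q) * A))

theorem mutualInfoIntegrand_sub_ge {q G A₁ A₂ : ℝ} (hq0 : 0 ≤ q) (hq1 : q ≤ 1) (hG : 0 < G)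
    (hA₁ : 0 < A₁) (hA₂ : 0 < A₂) :
    (1 - q) * (A₁ - A₂) * log (A₂ / (q * G + (1 - q) * A₂)) ≤
      mutualInfoIntegrand q G A₁ - mutualInfoIntegrand q G A₂ := by
  have hM₁ := convex_comb_pos hq0 hq1 hG hA₁
  have hM₂ := convex_comb_pos hq0 hq1 hG hA₂
  set M₁ := q * G + (1 - q) * A₁
  set M₂ := q * G + (1 - q) * A₂
  have hM : 1 - M₁ / M₂ ≤ log M₂ - log M₁ := by
    have := one_sub_inv_le_log_of_pos (div_pos hM₂ hM₁)
    rwa [inv_div, log_div hM₂.ne' hM₁.ne'] at this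
  have hA : 1 - A₂ * M₁ / (A₁ * M₂) ≤ log A₁ + log M₂ - log A₂ - log M₁ := by
    have := one_sub_inv_le_log_of_pos (show 0 < A₁ * M₂ / (A₂ * M₁) by positivity)
    rwa [inv_div, log_div (by positivity) (by positivity), log_mul hA₁.ne' hM₂.ne',
      log_mul hA₂.ne' hM₁.ne', ← sub_sub] at this
  -- the two linear lower bounds of the logarithms cancel exactly
  have hcancel : q * G * (1 - M₁ / M₂) + (1 - q) * A₁ * (1 - A₂ * M₁ / (A₁ * M₂)) = 0 := by
    field_simp
    ring
  unfold mutualInfoIntegrand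
  rw [log_div hG.ne' hM₁.ne', log_div hG.ne' hM₂.ne', log_div hA₁.ne' hM₁.ne',
    log_div hA₂.ne' hM₂.ne']
  linarith [mul_le_mul_of_nonneg_left hM (mul_nonneg hq0 hG.le),
    mul_le_mul_of_nonneg_left hA (mul_nonneg (sub_nonneg.2 hq1) hA₁.le)]

theorem measurable_mutualInfoIntegrand (q : ℝ) :
    Measurable (Function.uncurry (mutualInfoIntegrand q)) := by
  unfold mutualInfoIntegrand Function.uncurry
  fun_prop

theorem abs_mutualInfoIntegrand_le {q G A : ℝ} (hq0 : 0 < q) (hq1 : q < 1) (hG : 0 < G)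
    (hA : 0 < A) :
    |mutualInfoIntegrand q G A| ≤ (2 + |log q| + |log (1 - q)|) * (q * G + (1 - q) * A) := by
  have hqG : 0 < q * G := mul_pos hq0 hG
  have hqA : 0 < (1 - q) * A := mul_pos (by linarith) hA
  have h₁ := abs_mul_mul_log_div_le hq0 hG (le_add_of_nonneg_right hqA.le)
  have h₂ := abs_mul_mul_log_div_le (sub_pos.2 hq1) hA (le_add_of_nonneg_left hqG.le)
  calc |mutualInfoIntegrand q G A| ≤ _ := abs_add_le _ _
    _ ≤ _ := add_le_add h₁ h₂
    _ = _ := by ring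

theorem integrable_mutualInfoIntegrand {q : ℝ} {G A : ℝ → ℝ} (hq0 : 0 < q) (hq1 : q < 1)
    (hGi : Integrable G) (hAi : Integrable A) (hG : ∀ y, 0 < G y) (hA : ∀ y, 0 < A y) :
    Integrable fun y => mutualInfoIntegrand q (G y) (A y) := by
  refine Integrable.mono' (((hGi.const_mul q).add (hAi.const_mul (1 - q))).const_mul
    (2 + |log q| + |log (1 - q)|)) ?_ (ae_of_all _ fun y => ?_)
  · exact ((measurable_mutualInfoIntegrand q).comp_aemeasurable
      (hGi.aemeasurable.prodMk hAi.aemeasurable)).aestronglyMeasurable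
  · exact abs_mutualInfoIntegrand_le hq0 hq1 (hG y) (hA y)

theorem gauss_pos {σ : ℝ} (hσ : 0 < σ) (y m : ℝ) : 0 < gauss σ y m := by
  unfold gauss
  positivity

theorem integrable_gauss {σ : ℝ} (hσ : 0 < σ) (m : ℝ) : Integrable fun y => gauss σ y m := by
  have hb : 0 < 1 / (2 * σ ^ 2) := by positivity
  refine (((integrable_exp_neg_mul_sq hb).comp_sub_right m).const_mul
    (1 / (sqrt (2 * π) * σ))).congr (ae_of_all _ fun y => ?_)
  simp only [gauss]
  ring_nf

theorem gauss_reflect {σ a b c : ℝ} (hc : a + b = 2 * c) (u : ℝ) :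
    gauss σ (c - u) b = gauss σ (c + u) a := by
  unfold gauss
  rw [show c - u - b = -(c + u - a) by linarith, neg_sq]

theorem gauss_le_gauss_of_midpoint_le {σ a b y : ℝ} (hσ : 0 ≤ σ) (hab : a ≤ b)
    (hy : a + b ≤ 2 * y) :
    gauss σ y a ≤ gauss σ y b := by
  unfold gauss
  gcongr _ * exp (?_ / _)
  nlinarith [mul_nonneg (sub_nonneg.2 hab) (sub_nonneg.2 hy)]

theorem gauss_mul_gauss_le_of_le {σ a b y₁ y₂ : ℝ} (hab : a ≤ b) (hy : y₁ ≤ y₂) :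
    gauss σ y₂ a * gauss σ y₁ b ≤ gauss σ y₁ a * gauss σ y₂ b := by
  unfold gauss
  rw [mul_mul_mul_comm, ← exp_add, mul_mul_mul_comm, ← exp_add]
  refine mul_le_mul_of_nonneg_left (exp_le_exp.2 ?_) (mul_self_nonneg _)
  rw [← add_div, ← add_div]
  refine div_le_div_of_nonneg_right ?_ (by positivity)
  nlinarith [mul_nonneg (sub_nonneg.2 hy) (sub_nonneg.2 hab)]

noncomputable def channelIntegrand (R0 R0' R1 σ q ε y : ℝ) : ℝ :=
  mutualInfoIntegrand q (gauss σ y R1) (W R0 R0' R1 σ ε false y)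

theorem Cq_eq_integral_channelIntegrand (R0 R0' R1 σ q ε : ℝ) :
    Cq R0 R0' R1 σ q ε = (∫ y, channelIntegrand R0 R0' R1 σ q ε y) / log 2 := by
  rw [← integral_div]
  unfold Cq
  congr 1
  funext y
  simp only [channelIntegrand, mutualInfoIntegrand, W, if_true, logb]
  ring

section Channel

variable {R0 R0' R1 σ q ε : ℝ}

theorem W_false_pos (hσ : 0 < σ) (h0 : 0 ≤ ε) (h1 : ε ≤ 1) (y : ℝ) :
    0 < W R0 R0' R1 σ ε false y :=
  convex_comb_pos h0 h1 (gauss_pos hσ y R0') (gauss_pos hσ y R0)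

theorem integrable_W_false (hσ : 0 < σ) : Integrable (W R0 R0' R1 σ ε false) :=
  ((integrable_gauss hσ R0').const_mul ε).add ((integrable_gauss hσ R0).const_mul (1 - ε))

theorem integrable_channelIntegrand (hσ : 0 < σ) (hq0 : 0 < q) (hq1 : q < 1) (h0 : 0 ≤ ε)
    (h1 : ε ≤ 1) : Integrable (channelIntegrand R0 R0' R1 σ q ε) :=
  integrable_mutualInfoIntegrand hq0 hq1 (integrable_gauss hσ R1) (integrable_W_false hσ)
    (gauss_pos hσ · R1) (W_false_pos hσ h0 h1)

theorem W_false_mul_gauss_le (hR0' : R1 ≤ R0') (hR0 : R1 ≤ R0) (h0 : 0 ≤ ε) (h1 : ε ≤ 1)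
    {y₁ y₂ : ℝ} (hy : y₁ ≤ y₂) :
    W R0 R0' R1 σ ε false y₁ * gauss σ y₂ R1 ≤ W R0 R0' R1 σ ε false y₂ * gauss σ y₁ R1 := by
  have h' := mul_le_mul_of_nonneg_left (gauss_mul_gauss_le_of_le (σ := σ) hR0' hy) h0
  have h := mul_le_mul_of_nonneg_left (gauss_mul_gauss_le_of_le (σ := σ) hR0 hy) (sub_nonneg.2 h1)
  simp only [W, Bool.false_eq_true, if_false]
  linarith

theorem channelIntegrand_sub_reflect_add_nonneg (hσ : 0 < σ) (hR1 : R1 ≤ R0') (hR0 : R0' ≤ R0)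
    (hq0 : 0 ≤ q) (hq1 : q ≤ 1) {ε₁ ε₂ : ℝ} (h0 : 0 ≤ ε₁) (h12 : ε₁ ≤ ε₂) (h21 : ε₂ ≤ 1)
    {c u : ℝ} (hc : R0' + R0 = 2 * c) (hu : 0 ≤ u) :
    0 ≤ (channelIntegrand R0 R0' R1 σ q ε₁ (c - u) - channelIntegrand R0 R0' R1 σ q ε₂ (c - u)) +
      (channelIntegrand R0 R0' R1 σ q ε₁ (c + u) - channelIntegrand R0 R0' R1 σ q ε₂ (c + u)) := by
  have hW₁ : ∀ y, 0 < W R0 R0' R1 σ ε₁ false y := W_false_pos hσ h0 (h12.trans h21)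
  have hW₂ : ∀ y, 0 < W R0 R0' R1 σ ε₂ false y := W_false_pos hσ (h0.trans h12) h21
  set ψ : ℝ → ℝ := fun y => log (W R0 R0' R1 σ ε₂ false y /
    (q * gauss σ y R1 + (1 - q) * W R0 R0' R1 σ ε₂ false y))
  have grad (y : ℝ) : (1 - q) * (ε₂ - ε₁) * (gauss σ y R0 - gauss σ y R0') * ψ y ≤
      channelIntegrand R0 R0' R1 σ q ε₁ y - channelIntegrand R0 R0' R1 σ q ε₂ y := by
    have hdiff : W R0 R0' R1 σ ε₁ false y - W R0 R0' R1 σ ε₂ false y =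
        (ε₂ - ε₁) * (gauss σ y R0 - gauss σ y R0') := by
      simp only [W, Bool.false_eq_true, if_false]
      ring
    have := mutualInfoIntegrand_sub_ge hq0 hq1 (gauss_pos hσ y R1) (hW₁ y) (hW₂ y)
    rwa [hdiff, ← mul_assoc] at this
  have hψ : ψ (c - u) ≤ ψ (c + u) := by
    refine log_le_log (div_pos (hW₂ _) (convex_comb_pos hq0 hq1 (gauss_pos hσ _ R1) (hW₂ _)))
      (div_convex_comb_le_div_convex_comb hq0 hq1 (gauss_pos hσ _ R1) (gauss_pos hσ _ R1)
        (hW₂ _) (hW₂ _)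
        (W_false_mul_gauss_le hR1 (hR1.trans hR0) (h0.trans h12) h21 (by linarith)))
  have hodd : gauss σ (c - u) R0 - gauss σ (c - u) R0' =
      -(gauss σ (c + u) R0 - gauss σ (c + u) R0') := by
    rw [gauss_reflect hc, gauss_reflect (b := R0') (by linarith : R0 + R0' = 2 * c)]
    ring
  have hsign : gauss σ (c + u) R0' ≤ gauss σ (c + u) R0 :=
    gauss_le_gauss_of_midpoint_le hσ.le hR0 (by linarith)
  calc 0 ≤ (1 - q) * (ε₂ - ε₁) * (gauss σ (c + u) R0 - gauss σ (c + u) R0') *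
        (ψ (c + u) - ψ (c - u)) := by
        have : 0 ≤ 1 - q := sub_nonneg.2 hq1
        have : 0 ≤ ε₂ - ε₁ := sub_nonneg.2 h12
        have : 0 ≤ gauss σ (c + u) R0 - gauss σ (c + u) R0' := sub_nonneg.2 hsign
        have : 0 ≤ ψ (c + u) - ψ (c - u) := sub_nonneg.2 hψ
        positivity
    _ = (1 - q) * (ε₂ - ε₁) * (gauss σ (c - u) R0 - gauss σ (c - u) R0') * ψ (c - u) +
        (1 - q) * (ε₂ - ε₁) * (gauss σ (c + u) R0 - gauss σ (c + u) R0') * ψ (c + u) := by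
        rw [hodd]; ring
    _ ≤ _ := add_le_add (grad _) (grad _)

theorem Cq_le_Cq_of_le (hσ : 0 < σ) (hR1 : R1 ≤ R0') (hR0 : R0' ≤ R0) (hq0 : 0 < q) (hq1 : q < 1)
    {ε₁ ε₂ : ℝ} (h0 : 0 ≤ ε₁) (h12 : ε₁ ≤ ε₂) (h21 : ε₂ ≤ 1) :
    Cq R0 R0' R1 σ q ε₂ ≤ Cq R0 R0' R1 σ q ε₁ := by
  have hi₁ : Integrable (channelIntegrand R0 R0' R1 σ q ε₁) :=
    integrable_channelIntegrand hσ hq0 hq1 h0 (h12.trans h21)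
  have hi₂ : Integrable (channelIntegrand R0 R0' R1 σ q ε₂) :=
    integrable_channelIntegrand hσ hq0 hq1 (h0.trans h12) h21
  rw [Cq_eq_integral_channelIntegrand, Cq_eq_integral_channelIntegrand]
  refine div_le_div_of_nonneg_right ?_ (log_nonneg one_le_two)
  rw [← sub_nonneg, ← integral_sub hi₁ hi₂]
  refine integral_nonneg_of_reflect_add_nonneg (hi₁.sub hi₂) ((R0' + R0) / 2) fun u => ?_
  have hc : R0' + R0 = 2 * ((R0' + R0) / 2) := by ring
  rcases le_total 0 u with hu | hu
  · exact channelIntegrand_sub_reflect_add_nonneg hσ hR1 hR0 hq0.le hq1.le h0 h12 h21 hc hu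
  · have := channelIntegrand_sub_reflect_add_nonneg hσ hR1 hR0 hq0.le hq1.le h0 h12 h21 hc
      (neg_nonneg.2 hu)
    rw [sub_neg_eq_add, ← sub_eq_add_neg] at this
    simpa only [Pi.sub_apply, add_comm] using this

end Channel

/-- for fixed Bernoulli(q) input and fixed `σ > 0`, the mutual information
`C_q(ε,σ)` is non-increasing in `ε` on `[0,1]`; in particular
`C_q(1,σ) ≤ C_q(ε,σ) ≤ C_q(0,σ)` for all `ε ∈ [0,1]`. -/
theorem Cq_antitone_in_eps (R0 R0' R1 σ q : ℝ) (hσ : 0 < σ)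
    (h1 : R1 < R0') (h2 : R0' < R0) (hq0 : 0 < q) (hq1 : q < 1) :
    AntitoneOn (fun ε => Cq R0 R0' R1 σ q ε) (Set.Icc 0 1) ∧
    ∀ ε ∈ Set.Icc (0 : ℝ) 1,
      Cq R0 R0' R1 σ q 1 ≤ Cq R0 R0' R1 σ q ε ∧
      Cq R0 R0' R1 σ q ε ≤ Cq R0 R0' R1 σ q 0 := by
  have anti : AntitoneOn (fun ε => Cq R0 R0' R1 σ q ε) (Set.Icc 0 1) :=
    fun _ ha _ hb hab => Cq_le_Cq_of_le hσ h1.le h2.le hq0 hq1 ha.1 hab hb.2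
  exact ⟨anti, fun ε hε =>
    ⟨anti hε ⟨zero_le_one, le_rfl⟩ hε.2, anti ⟨le_rfl, zero_le_one⟩ hε hε.1⟩⟩
end

section
/- As q → 0⁺ with m,n,p_f fixed, the sneak-path probability satisfies ε_q = (m−1)(n−1) p_f q³ + O(q⁴); i.e., lim_{q→0} ε_q / q³ = (m−1)(n−1) p_f. -/
open Finset Filter
open scoped Topology

/-- The sneak-path probability `ε_q` for an `m×n` array with i.i.d. Bernoulli(q) data
and i.i.d. selector failures with probability `pf`. -/
noncomputable def epsq (m n : ℕ) (pf q : ℝ) : ℝ :=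
  1 - ∑ u ∈ Finset.range m, ∑ v ∈ Finset.range n,
      ((m - 1).choose u : ℝ) * ((n - 1).choose v : ℝ) * q ^ (u + v) *
        (1 - q) ^ (m - 1 - u + (n - 1 - v)) * (1 - pf * q) ^ (u * v)

lemma binom_one (k : ℕ) (q : ℝ) :
    ∑ u ∈ Finset.range (k+1), ((k.choose u : ℝ)) * q ^ u * (1 - q) ^ (k - u) = 1 := by
  have h := add_pow q (1-q) k
  have hq : q + (1-q) = 1 := by ring
  rw [hq, one_pow] at h
  calc ∑ u ∈ Finset.range (k+1), ((k.choose u : ℝ)) * q ^ u * (1 - q) ^ (k - u)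
      = ∑ u ∈ Finset.range (k+1), q ^ u * (1 - q) ^ (k - u) * (k.choose u : ℝ) :=
        Finset.sum_congr rfl fun u _ => by ring
    _ = 1 := h.symm

lemma key (m n : ℕ) (hm : 2 ≤ m) (hn : 2 ≤ n) (pf q : ℝ) :
    epsq m n pf q = ∑ u ∈ Finset.range m, ∑ v ∈ Finset.range n,
      ((m - 1).choose u : ℝ) * ((n - 1).choose v : ℝ) * q ^ (u + v) *
        (1 - q) ^ (m - 1 - u + (n - 1 - v)) * (1 - (1 - pf * q) ^ (u * v)) := by
  have h1 : (1:ℝ) = ∑ u ∈ Finset.range m, ∑ v ∈ Finset.range n,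
      ((m - 1).choose u : ℝ) * ((n - 1).choose v : ℝ) * q ^ (u + v) *
        (1 - q) ^ (m - 1 - u + (n - 1 - v)) := by
    have hm1 : m - 1 + 1 = m := by omega
    have hn1 : n - 1 + 1 = n := by omega
    have a := binom_one (m-1) q
    have b := binom_one (n-1) q
    rw [hm1] at a; rw [hn1] at b
    calc (1:ℝ) = (∑ u ∈ Finset.range m, (((m-1).choose u : ℝ)) * q ^ u * (1 - q) ^ (m-1 - u))
        * (∑ v ∈ Finset.range n, (((n-1).choose v : ℝ)) * q ^ v * (1 - q) ^ (n-1 - v)) := by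
          rw [a, b]; ring
      _ = _ := by
          rw [Finset.sum_mul_sum]
          exact Finset.sum_congr rfl fun u _ => Finset.sum_congr rfl fun v _ => by
            rw [pow_add, pow_add]; ring
  unfold epsq
  have h2 : (∑ u ∈ Finset.range m, ∑ v ∈ Finset.range n,
      ((m - 1).choose u : ℝ) * ((n - 1).choose v : ℝ) * q ^ (u + v) *
        (1 - q) ^ (m - 1 - u + (n - 1 - v)) * (1 - (1 - pf * q) ^ (u * v)))
      = (∑ u ∈ Finset.range m, ∑ v ∈ Finset.range n,
      ((m - 1).choose u : ℝ) * ((n - 1).choose v : ℝ) * q ^ (u + v) *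
        (1 - q) ^ (m - 1 - u + (n - 1 - v)))
      - (∑ u ∈ Finset.range m, ∑ v ∈ Finset.range n,
      ((m - 1).choose u : ℝ) * ((n - 1).choose v : ℝ) * q ^ (u + v) *
        (1 - q) ^ (m - 1 - u + (n - 1 - v)) * (1 - pf * q) ^ (u * v)) := by
    rw [← Finset.sum_sub_distrib]
    refine Finset.sum_congr rfl fun u _ => ?_
    rw [← Finset.sum_sub_distrib]
    exact Finset.sum_congr rfl fun v _ => by ring
  rw [h2, ← h1]

/-- as `q → 0⁺` with `m, n, p_f` fixed,
`ε_q = (m−1)(n−1) p_f q³ + O(q⁴)`; i.e. `lim_{q→0⁺} ε_q/q³ = (m−1)(n−1) p_f`. -/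
theorem sneak_path_leading_order (m n : ℕ) (hm : 2 ≤ m) (hn : 2 ≤ n)
    (pf : ℝ) (hpf0 : 0 < pf) (hpf1 : pf ≤ 1) :
    Tendsto (fun q => epsq m n pf q / q ^ 3) (nhdsWithin 0 (Set.Ioi 0))
      (nhds (((m : ℝ) - 1) * ((n : ℝ) - 1) * pf)) := by
  set G : ℝ → ℝ := fun q => ∑ u ∈ Finset.range m, ∑ v ∈ Finset.range n,
      ((m - 1).choose u : ℝ) * ((n - 1).choose v : ℝ) * q ^ (u + v - 2) *
        (1 - q) ^ (m - 1 - u + (n - 1 - v)) *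
        (pf * ∑ j ∈ Finset.range (u * v), (1 - pf * q) ^ j) with hGdef
  have hcont : Tendsto G (nhdsWithin 0 (Set.Ioi 0)) (nhds (G 0)) := by
    apply Tendsto.mono_left _ nhdsWithin_le_nhds
    exact Continuous.tendsto (by fun_prop) 0
  have hG0 : G 0 = ((m:ℝ)-1)*((n:ℝ)-1)*pf := by
    rw [hGdef]
    simp only [mul_zero, sub_zero, one_pow, Finset.sum_const, Finset.card_range, nsmul_eq_mul]
    rw [Finset.sum_eq_single_of_mem 1 (Finset.mem_range.2 (by omega))]
    · rw [Finset.sum_eq_single_of_mem 1 (Finset.mem_range.2 (by omega))]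
      · rw [Nat.choose_one_right, Nat.choose_one_right,
          Nat.cast_sub (by omega : 1 ≤ m), Nat.cast_sub (by omega : 1 ≤ n)]
        norm_num
      · intro v _ hv
        rcases Nat.eq_zero_or_pos v with rfl | hv1
        · simp
        · have : (0:ℝ) ^ (1 + v - 2) = 0 := zero_pow (by omega)
          rw [this]; ring
    · intro u _ hu
      apply Finset.sum_eq_zero
      intro v _
      rcases Nat.eq_zero_or_pos u with rfl | hu1
      · simp
      · rcases Nat.eq_zero_or_pos v with rfl | hv1
        · simp
        · have : (0:ℝ) ^ (u + v - 2) = 0 := zero_pow (by omega)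
          rw [this]; ring
  have heq : G =ᶠ[nhdsWithin 0 (Set.Ioi 0)] (fun q => epsq m n pf q / q ^ 3) := by
    filter_upwards [self_mem_nhdsWithin] with q hq
    have hq0 : (0:ℝ) < q := hq
    rw [key m n hm hn pf q, Finset.sum_div, hGdef]
    refine Finset.sum_congr rfl fun u _ => ?_
    rw [Finset.sum_div]
    refine Finset.sum_congr rfl fun v _ => ?_
    rcases Nat.eq_zero_or_pos (u * v) with h0 | hpos
    · simp [h0]
    · have hu : 1 ≤ u := Nat.one_le_iff_ne_zero.2 (by rintro rfl; simp at hpos)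
      have hv : 1 ≤ v := Nat.one_le_iff_ne_zero.2 (by rintro rfl; simp at hpos)
      have hx : (1 : ℝ) - (1 - pf*q)^(u*v)
          = (pf*q) * ∑ j ∈ Finset.range (u*v), (1-pf*q)^j := by
        linear_combination geom_sum_mul (1 - pf*q) (u*v)
      rw [hx, eq_div_iff (by positivity : (q:ℝ)^3 ≠ 0)]
      have hq3 : q ^ (u+v-2) * q^3 = q^(u+v) * q := by
        rw [← pow_add, ← pow_succ]; congr 1; omega
      linear_combination (((m-1).choose u : ℝ) * ((n-1).choose v : ℝ) *
        (1-q)^(m-1-u+(n-1-v)) * (pf * ∑ j ∈ Finset.range (u*v), (1-pf*q)^j)) * hq3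
  rw [← hG0]
  exact Tendsto.congr' heq hcont
end
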